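/- Let p be an odd prime, g : F_{p^n} → F_p, and u, v ∈ F_{p^n} with D_u D_u g ≡ 0, D_v D_v g ≡ 0, and D_u D_v g ≡ 0. Then for all scalars a, b ∈ F_p and all x ∈ F_{p^n}: g(x + a•u + b•v) = g(x) + a·D_u g(x) + b·D_v g(x). -/
import Mathlib


theorem stmt14 (p n : ℕ) [Fact p.Prime] (hp : Odd p)
    (F : Type*) [Field F] [Fintype F] [Algebra (ZMod p) F]
    (hcard : Fintype.card F = p ^ n)
    (g : F → ZMod p) (u v : F)
    (huu : ∀ x : F, g (x + u + u) - g (x + u) - g (x + u) + g x = 0)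
    (hvv : ∀ x : F, g (x + v + v) - g (x + v) - g (x + v) + g x = 0)
    (huv : ∀ x : F, g (x + u + v) - g (x + u) - g (x + v) + g x = 0) :
    ∀ (a b : ZMod p) (x : F),
      g (x + a • u + b • v)
        = g x + a * (g (x + u) - g x) + b * (g (x + v) - g x) := by
  have hu_shift_u : ∀ x : F, g (x + u + u) - g (x + u) = g (x + u) - g x := by
    intro x; linear_combination huu x
  have hv_shift_u : ∀ x : F, g (x + u + v) - g (x + u) = g (x + v) - g x := by
    intro x; linear_combination huv x
  have hv_shift_v : ∀ x : F, g (x + v + v) - g (x + v) = g (x + v) - g x := by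
    intro x; linear_combination hvv x
  have hu_nsmul : ∀ (k : ℕ) (x : F),
      g (x + k • u + u) - g (x + k • u) = g (x + u) - g x := by
    intro k
    induction k with
    | zero => intro x; simp
    | succ k ih =>
      intro x
      rw [succ_nsmul, ← add_assoc]
      linear_combination hu_shift_u (x + k • u) + ih x
  have hvu_nsmul : ∀ (k : ℕ) (x : F),
      g (x + k • u + v) - g (x + k • u) = g (x + v) - g x := by
    intro k
    induction k with
    | zero => intro x; simp
    | succ k ih =>
      intro x
      rw [succ_nsmul, ← add_assoc]
      linear_combination hv_shift_u (x + k • u) + ih x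
  have hv_nsmul : ∀ (k : ℕ) (x : F),
      g (x + k • v + v) - g (x + k • v) = g (x + v) - g x := by
    intro k
    induction k with
    | zero => intro x; simp
    | succ k ih =>
      intro x
      rw [succ_nsmul, ← add_assoc]
      linear_combination hv_shift_v (x + k • v) + ih x
  have hgu : ∀ (k : ℕ) (x : F),
      g (x + k • u) = g x + (k : ZMod p) * (g (x + u) - g x) := by
    intro k
    induction k with
    | zero => intro x; simp
    | succ k ih =>
      intro x
      rw [succ_nsmul, ← add_assoc]
      push_cast
      linear_combination hu_nsmul k x + ih x
  have hgv : ∀ (k : ℕ) (x : F),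
      g (x + k • v) = g x + (k : ZMod p) * (g (x + v) - g x) := by
    intro k
    induction k with
    | zero => intro x; simp
    | succ k ih =>
      intro x
      rw [succ_nsmul, ← add_assoc]
      push_cast
      linear_combination hv_nsmul k x + ih x
  intro a b x
  have ha : a • u = a.val • u := by
    rw [← Nat.cast_smul_eq_nsmul (ZMod p), ZMod.natCast_val, ZMod.cast_id]
  have hb : b • v = b.val • v := by
    rw [← Nat.cast_smul_eq_nsmul (ZMod p), ZMod.natCast_val, ZMod.cast_id]
  rw [ha, hb]
  have h1 := hgv b.val (x + a.val • u)
  have h2 := hvu_nsmul a.val x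
  have h3 := hgu a.val x
  have hav : ((a.val : ℕ) : ZMod p) = a := by rw [ZMod.natCast_val, ZMod.cast_id]
  have hbv : ((b.val : ℕ) : ZMod p) = b := by rw [ZMod.natCast_val, ZMod.cast_id]
  linear_combination h1 + (b.val : ZMod p) * h2 + h3
    + (g (x + u) - g x) * hav + (g (x + v) - g x) * hbv
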